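/- Completeness of shifting: for every clause set M, if sh(M) is satisfiable then M is satisfiable, where sh = pf followed by bs, i.e. sh(M) = bs(pf(M)). -/

import Mathlib

namespace BUMG

/-- First-order terms over function symbols `F`, with variables indexed by `ℕ`. -/
inductive Term (F : Type) : Type where
  | var : ℕ → Term F
  | app : F → List (Term F) → Term F

namespace Term
variable {F : Type}

/-- The list of variables occurring in a term. -/
def vars : Term F → List ℕ
  | var n => [n]
  | app _ ts => ts.attach.flatMap (fun t => vars t.1)
decreasing_by simp_wf; have := List.sizeOf_lt_of_mem t.2; omega

/-- The function symbols (with the arity of the occurrence) occurring in a term. -/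
def funcs : Term F → List (F × ℕ)
  | var _ => []
  | app f ts => (f, ts.length) :: ts.attach.flatMap (fun t => funcs t.1)
decreasing_by simp_wf; have := List.sizeOf_lt_of_mem t.2; omega

/-- Applying a substitution to a term. -/
def subst (g : ℕ → Term F) : Term F → Term F
  | var n => g n
  | app f ts => app f (ts.attach.map (fun t => subst g t.1))
decreasing_by simp_wf; have := List.sizeOf_lt_of_mem t.2; omega

/-- The number of occurrences of symbols (variables and function symbols) in a term. -/
def size : Term F → ℕ
  | var _ => 1
  | app _ ts => 1 + (ts.attach.map (fun t => size t.1)).sum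
decreasing_by simp_wf; have := List.sizeOf_lt_of_mem t.2; omega

/-- A term is ground iff it contains no variables. -/
def IsGround (t : Term F) : Prop := t.vars = []

def isVar : Term F → Bool
  | var _ => true
  | app _ _ => false

/-- A proper functional term is a term that is neither a variable nor a constant. -/
def isPF : Term F → Bool
  | app _ (_ :: _) => true
  | _ => false

/-- The subterm relation. -/
inductive Subterm : Term F → Term F → Prop
  | refl (t : Term F) : Subterm t t
  | app {s t : Term F} {f : F} {ts : List (Term F)} :
      t ∈ ts → Subterm s t → Subterm s (app f ts)

end Term

/-- Atoms over predicate symbols `P` and function symbols `F`. -/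
structure Atom (P F : Type) where
  pred : P
  args : List (Term F)

namespace Atom
variable {P F : Type}

def subst (g : ℕ → Term F) (a : Atom P F) : Atom P F := ⟨a.pred, a.args.map (Term.subst g)⟩
def vars (a : Atom P F) : List ℕ := a.args.flatMap Term.vars
def IsGround (a : Atom P F) : Prop := a.vars = []
def funcs (a : Atom P F) : List (F × ℕ) := a.args.flatMap Term.funcs
/-- Whether the atom contains a proper functional term. -/
def hasPF (a : Atom P F) : Bool := a.args.any Term.isPF
def size (a : Atom P F) : ℕ := 1 + (a.args.map Term.size).sum

end Atom

/-- A clause `H₁ ∨ ... ∨ Hₘ ← B₁ ∧ ... ∧ Bₖ` with head atoms `heads`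
and body atoms `body`. -/
structure Clause (P F : Type) where
  heads : List (Atom P F)
  body : List (Atom P F)

namespace Clause
variable {P F : Type}

def atoms (C : Clause P F) : List (Atom P F) := C.heads ++ C.body
def vars (C : Clause P F) : List ℕ := C.atoms.flatMap Atom.vars
def bodyVars (C : Clause P F) : List ℕ := C.body.flatMap Atom.vars
def headVars (C : Clause P F) : List ℕ := C.heads.flatMap Atom.vars
def maxVar (C : Clause P F) : ℕ := C.vars.foldr max 0
def subst (g : ℕ → Term F) (C : Clause P F) : Clause P F :=
  ⟨C.heads.map (Atom.subst g), C.body.map (Atom.subst g)⟩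
/-- The predicate symbols (with the arity of the occurrence) occurring in a clause. -/
def preds (C : Clause P F) : List (P × ℕ) := C.atoms.map (fun a => (a.pred, a.args.length))
/-- The function symbols (with the arity of the occurrence) occurring in a clause. -/
def funcs (C : Clause P F) : List (F × ℕ) := C.atoms.flatMap Atom.funcs
/-- The number of occurrences of symbols in a clause. -/
def size (C : Clause P F) : ℕ := (C.atoms.map Atom.size).sum

/-- A clause is range-restricted iff every variable occurring in it occurs in its body. -/
def RangeRestricted (C : Clause P F) : Prop := ∀ v ∈ C.vars, v ∈ C.bodyVars

/-- A Bernays–Schönfinkel clause: every functional term occurring in it is a constant. -/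
def BS (C : Clause P F) : Prop := ∀ fn ∈ C.funcs, fn.2 = 0

end Clause

/-- A clause set is range-restricted iff all its clauses are. -/
def RangeRestrictedSet {P F : Type} (M : Set (Clause P F)) : Prop :=
  ∀ C ∈ M, C.RangeRestricted

/-- The predicate symbols (with arities) occurring in a clause set. -/
def predsOf {P F : Type} (M : Set (Clause P F)) : Set (P × ℕ) :=
  { pn | ∃ C ∈ M, pn ∈ C.preds }

/-- The function symbols (with arities) occurring in a clause set. -/
def funcsOf {P F : Type} (M : Set (Clause P F)) : Set (F × ℕ) :=
  { fn | ∃ C ∈ M, fn ∈ C.funcs }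

/-- A signature: a set of predicate symbols with arities and
a set of function symbols with arities. -/
structure Sig (P F : Type) where
  preds : Set (P × ℕ)
  funcs : Set (F × ℕ)

/-- The clause set `M` is well-formed over the signature `σ`: all symbols occurring in `M`
belong to `σ` (with matching arities). -/
def WFSet {P F : Type} (σ : Sig P F) (M : Set (Clause P F)) : Prop :=
  ∀ C ∈ M, (∀ pn ∈ C.preds, pn ∈ σ.preds) ∧ (∀ fn ∈ C.funcs, fn ∈ σ.funcs)

/-- The total number of occurrences of symbols in a clause set. -/
noncomputable def setSize {P F : Type} (M : Set (Clause P F)) : ℕ :=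
  ∑ᶠ C ∈ M, C.size

/-! ### Herbrand semantics -/

/-- A substitution is ground iff it maps every variable to a ground term. -/
def GroundSubst {F : Type} (g : ℕ → Term F) : Prop := ∀ n, (g n).IsGround

/-- A (Herbrand) interpretation `I` (a set of ground atoms) satisfies a clause iff
it satisfies every ground instance of it. -/
def satClause {P F : Type} (I : Set (Atom P F)) (C : Clause P F) : Prop :=
  ∀ g : ℕ → Term F, GroundSubst g →
    (∀ a ∈ C.body, a.subst g ∈ I) → ∃ a ∈ C.heads, a.subst g ∈ I

/-- A clause set is satisfiable iff some Herbrand interpretation (a set of ground atoms)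
satisfies every ground instance of every clause of it. -/
def Satisfiable {P F : Type} (M : Set (Clause P F)) : Prop :=
  ∃ I : Set (Atom P F), (∀ a ∈ I, a.IsGround) ∧ ∀ C ∈ M, satClause I C

/-! ### Equality axioms and E-satisfiability -/

/-- The equality atom `s ≈ t` (`eqP` being the distinguished equality predicate `≈`). -/
def eqAtom {P F : Type} (eqP : P) (s t : Term F) : Atom P F := ⟨eqP, [s, t]⟩

def rangeVars {F : Type} (n : ℕ) : List (Term F) := (List.range n).map Term.var

def xsList {F : Type} (n : ℕ) : List (Term F) := (List.range n).map (fun i => Term.var (2*i))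
def ysList {F : Type} (n : ℕ) : List (Term F) := (List.range n).map (fun i => Term.var (2*i+1))
def eqConjList {P F : Type} (eqP : P) (n : ℕ) : List (Atom P F) :=
  (List.range n).map (fun i => eqAtom eqP (Term.var (2*i)) (Term.var (2*i+1)))

/-- The equality axioms `EAX`: `≈` is reflexive, symmetric, transitive and compatible with
the given function and predicate symbols. -/
def EAX {P F : Type} (eqP : P) (Ps : Set (P × ℕ)) (Fs : Set (F × ℕ)) : Set (Clause P F) :=
  { ⟨[eqAtom eqP (Term.var 0) (Term.var 0)], []⟩,
    ⟨[eqAtom eqP (Term.var 1) (Term.var 0)], [eqAtom eqP (Term.var 0) (Term.var 1)]⟩,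
    ⟨[eqAtom eqP (Term.var 0) (Term.var 2)],
      [eqAtom eqP (Term.var 0) (Term.var 1), eqAtom eqP (Term.var 1) (Term.var 2)]⟩ } ∪
  { D | ∃ fn ∈ Fs,
      D = ⟨[eqAtom eqP (Term.app fn.1 (xsList fn.2)) (Term.app fn.1 (ysList fn.2))],
           eqConjList eqP fn.2⟩ } ∪
  { D | ∃ pn ∈ Ps,
      D = ⟨[⟨pn.1, ysList pn.2⟩], ⟨pn.1, xsList pn.2⟩ :: eqConjList eqP pn.2⟩ }

/-- A clause set `M` is E-satisfiable iff `M` together with the equality axioms for the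
symbols occurring in `M` is satisfiable. -/
def ESatisfiable {P F : Type} (eqP : P) (M : Set (Clause P F)) : Prop :=
  Satisfiable (M ∪ EAX eqP (predsOf M) (funcsOf M))

/-! ### Range-restricting transformations -/

/-- The atom `dom(t)`. -/
def domAtom {P F : Type} (domP : P) (t : Term F) : Atom P F := ⟨domP, [t]⟩

/-- The term `c` for a constant `c`. -/
def cTerm {F : Type} (c : F) : Term F := Term.app c []

/-- The clause `dom(c) ← ⊤`. -/
def domcClause {P F : Type} (domP : P) (c : F) : Clause P F :=
  ⟨[domAtom domP (cTerm c)], []⟩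

/-- Range-restricting a clause (Step (2) of `crr`, Step (3) of `rr`):
`H ← B` becomes `H ← B ∧ dom(x₁) ∧ ... ∧ dom(xₖ)` where `x₁,...,xₖ` are the variables
occurring in the head but not in the body. -/
def rangeRestrictClause {P F : Type} (domP : P) (C : Clause P F) : Clause P F :=
  ⟨C.heads, C.body ++
    ((C.headVars.filter (fun v => v ∉ C.bodyVars)).dedup).map
      (fun v => domAtom domP (Term.var v))⟩

/-- The argument list of the term abstraction of an atom: argument positions holding
non-variable terms are replaced by fresh variables. -/
def abstrArgs {F : Type} (base : ℕ) (ts : List (Term F)) : List (Term F) :=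
  ts.mapIdx (fun i t => if t.isVar then t else Term.var (base + i))

/-- Step (2) of the `rr` transformation: for each clause `H ← B` of `M`, each body atom
`P(t₁,...,tₙ)` of `B` with term abstraction `P(s₁,...,sₙ)` and abstraction substitution `α`,
the clauses `dom(xᵢ)α ← P(s₁,...,sₙ)` for every `xᵢ` in the domain of `α`. -/
def step2Set {P F : Type} (domP : P) (M : Set (Clause P F)) : Set (Clause P F) :=
  { D | ∃ C ∈ M, ∃ a ∈ C.body, ∃ i : Fin a.args.length,
        (a.args.get i).isVar = false ∧
        D = ⟨[domAtom domP (a.args.get i)],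
             [⟨a.pred, abstrArgs (C.maxVar + 1) a.args⟩]⟩ }

/-- Step (4) of the `rr` transformation: the clauses `dom(xᵢ) ← P(x₁,...,xₙ)` for every
`n`-ary predicate symbol `P` of the signature and every `1 ≤ i ≤ n`. -/
def step4Set {P F : Type} (domP : P) (Ps : Set (P × ℕ)) : Set (Clause P F) :=
  { D | ∃ pn ∈ Ps, ∃ i, i < pn.2 ∧
        D = ⟨[domAtom domP (Term.var i)], [⟨pn.1, rangeVars pn.2⟩]⟩ }

/-- Step (5) of the `rr` transformation: the clauses `dom(xᵢ) ← dom(f(x₁,...,xₙ))` for every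
`n`-ary function symbol `f` of the signature and every `1 ≤ i ≤ n`. -/
def step5Set {P F : Type} (domP : P) (Fs : Set (F × ℕ)) : Set (Clause P F) :=
  { D | ∃ fn ∈ Fs, ∃ i, i < fn.2 ∧
        D = ⟨[domAtom domP (Term.var i)],
             [domAtom domP (Term.app fn.1 (rangeVars fn.2))]⟩ }

/-- The new range-restricting transformation `rr` (over the signature `σ`, with fresh unary
predicate symbol `dom` and constant `c`): the clauses of `M`, the clause `dom(c) ← ⊤` and
the Step-(2) clauses, all range-restricted by Step (3), together with the Step-(4) and
Step-(5) clauses. -/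
def rr {P F : Type} [DecidableEq P] [DecidableEq F] (σ : Sig P F) (domP : P) (c : F)
    (M : Set (Clause P F)) : Set (Clause P F) :=
  (rangeRestrictClause domP '' (M ∪ {domcClause domP c} ∪ step2Set domP M))
  ∪ step4Set domP σ.preds ∪ step5Set domP σ.funcs

/-- Step (3) of the classical transformation `crr`: the clauses
`dom(f(x₁,...,xₙ)) ← dom(x₁) ∧ ... ∧ dom(xₙ)` enumerating the Herbrand universe. -/
def crrStep3 {P F : Type} (domP : P) (Fs : Set (F × ℕ)) : Set (Clause P F) :=
  { D | ∃ fn ∈ Fs,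
        D = ⟨[domAtom domP (Term.app fn.1 (rangeVars fn.2))],
             (List.range fn.2).map (fun i => domAtom domP (Term.var i))⟩ }

/-- The classical range-restricting transformation `crr`. -/
def crr {P F : Type} [DecidableEq P] [DecidableEq F] (σ : Sig P F) (domP : P) (c : F)
    (M : Set (Clause P F)) : Set (Clause P F) :=
  (rangeRestrictClause domP '' (M ∪ {domcClause domP c})) ∪ crrStep3 domP σ.funcs

/-! ### Shifting -/

/-- Partial flattening of the arguments of a non-equational body atom: top-level proper
functional terms are replaced by fresh variables. The `j`-th body atom uses the fresh
variables `base + Nat.pair j i`. -/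
def pfArgs {P F : Type} [DecidableEq P] (eqP : P) (base j : ℕ) (a : Atom P F) : Atom P F :=
  if a.pred = eqP then a
  else ⟨a.pred, a.args.mapIdx (fun i t => if t.isPF then Term.var (base + Nat.pair j i) else t)⟩

/-- The equations `tᵢ ≈ xᵢ` introduced by partially flattening a body atom. -/
def pfEqs {P F : Type} [DecidableEq P] (eqP : P) (base j : ℕ) (a : Atom P F) :
    List (Atom P F) :=
  if a.pred = eqP then []
  else (a.args.mapIdx (fun i t => (i, t))).filterMap
        (fun p => if p.2.isPF then
            some (eqAtom eqP p.2 (Term.var (base + Nat.pair j p.1))) else none)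

/-- Partial flattening of a clause. -/
def pfClause {P F : Type} [DecidableEq P] (eqP : P) (C : Clause P F) : Clause P F :=
  ⟨C.heads,
   C.body.mapIdx (fun j a => pfArgs eqP (C.maxVar + 1) j a) ++
   (C.body.mapIdx (fun j a => pfEqs eqP (C.maxVar + 1) j a)).flatten⟩

/-- The reflexivity unit clause `x ≈ x ← ⊤`. -/
def reflClause {P F : Type} (eqP : P) : Clause P F :=
  ⟨[eqAtom eqP (Term.var 0) (Term.var 0)], []⟩

/-- The partial flattening transformation `pf`. -/
def pf {P F : Type} [DecidableEq P] (eqP : P) (M : Set (Clause P F)) : Set (Clause P F) :=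
  pfClause eqP '' M ∪ {reflClause eqP}

/-- The atom `P̄(t₁,...,tₙ)` for the atom `P(t₁,...,tₙ)`, where `bar` maps each predicate
symbol `P` to the fresh predicate symbol `P̄` uniquely associated with it. -/
def barAtom {P F : Type} (bar : P → P) (a : Atom P F) : Atom P F := ⟨bar a.pred, a.args⟩

/-- Basic shifting of a clause: the body atoms containing a proper functional term are
moved, negated (via `bar`), into the head. -/
def bsClause {P F : Type} (bar : P → P) (C : Clause P F) : Clause P F :=
  ⟨C.heads ++ (C.body.filter (fun a => a.hasPF)).map (barAtom bar),
   C.body.filter (fun a => !a.hasPF)⟩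

/-- The predicate symbols (with arities) of shifted atoms of `M`. -/
def shiftedPreds {P F : Type} (M : Set (Clause P F)) : Set (P × ℕ) :=
  { pn | ∃ C ∈ M, ∃ a ∈ C.body, a.hasPF = true ∧ pn = (a.pred, a.args.length) }

/-- The basic shifting transformation `bs`: shift deep body atoms and add the shifted atom
consistency clauses `⊥ ← P(x₁,...,xₙ) ∧ P̄(x₁,...,xₙ)`. -/
def bs {P F : Type} (bar : P → P) (M : Set (Clause P F)) : Set (Clause P F) :=
  bsClause bar '' M ∪
  { D | ∃ pn ∈ shiftedPreds M,
        D = ⟨[], [⟨pn.1, rangeVars pn.2⟩, ⟨bar pn.1, rangeVars pn.2⟩]⟩ }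

/-- The shifting transformation: `sh(M) = bs(pf(M))`. -/
def sh {P F : Type} [DecidableEq P] (eqP : P) (bar : P → P) (M : Set (Clause P F)) :
    Set (Clause P F) :=
  bs bar (pf eqP M)

/-! ### Blocking -/

/-- The head `x ≈ y ∨ x ≉ y` of the blocking clauses. -/
def blockSplitHead {P F : Type} (eqP neqP : P) : List (Atom P F) :=
  [eqAtom eqP (Term.var 0) (Term.var 1), eqAtom neqP (Term.var 0) (Term.var 1)]

/-- The clause `⊥ ← x ≈ y ∧ x ≉ y`. -/
def eqNeqBot {P F : Type} (eqP neqP : P) : Clause P F :=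
  ⟨[], [eqAtom eqP (Term.var 0) (Term.var 1), eqAtom neqP (Term.var 0) (Term.var 1)]⟩

/-- The unrestricted domain blocking transformation `blud`. -/
def blud {P F : Type} (domP eqP neqP : P) (M : Set (Clause P F)) : Set (Clause P F) :=
  M ∪ { ⟨blockSplitHead eqP neqP, [domAtom domP (Term.var 0), domAtom domP (Term.var 1)]⟩,
        eqNeqBot eqP neqP }

/-- The atom `sub(s,t)`. -/
def subAtom {P F : Type} (subP : P) (s t : Term F) : Atom P F := ⟨subP, [s, t]⟩

/-- The axioms describing the subterm relationship: `sub(x,x) ← dom(x)` and, for every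
`n`-ary function symbol `f` of the signature and `1 ≤ i ≤ n`,
`sub(x, f(x₁,...,xₙ)) ← sub(x,xᵢ) ∧ dom(x) ∧ dom(f(x₁,...,xₙ))`. -/
def subClauses {P F : Type} (domP subP : P) (Fs : Set (F × ℕ)) : Set (Clause P F) :=
  { ⟨[subAtom subP (Term.var 0) (Term.var 0)], [domAtom domP (Term.var 0)]⟩ } ∪
  { D | ∃ fn ∈ Fs, ∃ i, i < fn.2 ∧
        D = ⟨[subAtom subP (Term.var fn.2) (Term.app fn.1 (rangeVars fn.2))],
             [subAtom subP (Term.var fn.2) (Term.var i),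
              domAtom domP (Term.var fn.2),
              domAtom domP (Term.app fn.1 (rangeVars fn.2))]⟩ }

/-- The subterm domain blocking transformation `blsd`. -/
def blsd {P F : Type} (σ : Sig P F) (domP eqP neqP subP : P) (M : Set (Clause P F)) :
    Set (Clause P F) :=
  M ∪ subClauses domP subP σ.funcs ∪
  { ⟨blockSplitHead eqP neqP, [subAtom subP (Term.var 0) (Term.var 1)]⟩,
    eqNeqBot eqP neqP }

/-- The subterm predicate blocking transformation `blsp`. -/
def blsp {P F : Type} (σ : Sig P F) (domP eqP neqP subP : P) (M : Set (Clause P F)) :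
    Set (Clause P F) :=
  M ∪ subClauses domP subP σ.funcs ∪
  { D | ∃ p : P, (p, 1) ∈ σ.preds ∧
        D = ⟨blockSplitHead eqP neqP,
             [subAtom subP (Term.var 0) (Term.var 1),
              ⟨p, [Term.var 0]⟩, ⟨p, [Term.var 1]⟩]⟩ } ∪
  { eqNeqBot eqP neqP }

/-- The unrestricted predicate blocking transformation `blup`. -/
def blup {P F : Type} (σ : Sig P F) (domP eqP neqP : P) (M : Set (Clause P F)) :
    Set (Clause P F) :=
  M ∪ { D | ∃ p : P, (p, 1) ∈ σ.preds ∧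
        D = ⟨blockSplitHead eqP neqP, [⟨p, [Term.var 0]⟩, ⟨p, [Term.var 1]⟩]⟩ } ∪
  { eqNeqBot eqP neqP }

/-! ### Combined transformations -/

/-- The base transformations `rr`, `sh∘rr`, `crr`, `sh∘crr`
(composition read left-to-right, so `(sh∘rr)(M) = rr(sh(M))`). -/
inductive BaseTr | rr | shrr | crr | shcrr

/-- The optional blocking transformations. -/
inductive BlockTr | id | blsd | blsp | blud | blup

def applyBase {P F : Type} [DecidableEq P] [DecidableEq F] (σ : Sig P F) (domP : P) (c : F)
    (eqP : P) (bar : P → P) : BaseTr → Set (Clause P F) → Set (Clause P F)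
  | .rr, M => rr σ domP c M
  | .shrr, M => rr σ domP c (sh eqP bar M)
  | .crr, M => crr σ domP c M
  | .shcrr, M => crr σ domP c (sh eqP bar M)

def applyBlock {P F : Type} (σ : Sig P F) (domP eqP neqP subP : P) :
    BlockTr → Set (Clause P F) → Set (Clause P F)
  | .id, M => M
  | .blsd, M => blsd σ domP eqP neqP subP M
  | .blsp, M => blsp σ domP eqP neqP subP M
  | .blud, M => blud domP eqP neqP M
  | .blup, M => blup σ domP eqP neqP M

/-- A combined transformation: a base transformation optionally followed by a blocking
transformation (composition read left-to-right). -/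
def applyTr {P F : Type} [DecidableEq P] [DecidableEq F] (σ : Sig P F) (domP : P) (c : F)
    (eqP neqP subP : P) (bar : P → P) (b : BaseTr) (τ : BlockTr) (M : Set (Clause P F)) :
    Set (Clause P F) :=
  applyBlock σ domP eqP neqP subP τ (applyBase σ domP c eqP bar b M)

/-- The clause `x ≈ x ← dom(x)`. -/
def reflDomClause {P F : Type} (domP eqP : P) : Clause P F :=
  ⟨[eqAtom eqP (Term.var 0) (Term.var 0)], [domAtom domP (Term.var 0)]⟩

end BUMG

/-!
A model of `sh(M)` is already a model of `M`.

Basic shifting loses nothing: when the body of a clause holds, so does each of its shifted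
atoms `B`, hence `B̄` is false by `⊥ ← B ∧ B̄`, and a true head atom of the shifted clause must
be one of the original heads.

Partial flattening loses nothing: a ground instance of a clause of `M` arises from a ground
instance of its flattened version by sending each fresh variable `xᵢ` to the instance of the
term `tᵢ` it replaced. The added equations `tᵢ ≈ xᵢ` then become reflexivity instances, which
hold by `x ≈ x ← ⊤`.
-/

namespace BUMG

variable {P F : Type}

namespace Term

theorem subst_var (g : ℕ → Term F) (n : ℕ) : (var n).subst g = g n := by
  simp [subst]

theorem subst_app (g : ℕ → Term F) (f : F) (ts : List (Term F)) :
    (app f ts).subst g = app f (ts.map (subst g)) := by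
  rw [subst]; simp

theorem vars_app (f : F) (ts : List (Term F)) : (app f ts).vars = ts.flatMap vars := by
  rw [vars]; simp

theorem subst_subst : ∀ (t : Term F) (σ g : ℕ → Term F),
    (t.subst σ).subst g = t.subst (fun v => (σ v).subst g)
  | .var n, σ, g => by simp only [subst_var]
  | .app f ts, σ, g => by
      simp only [subst_app, List.map_map]
      congr 1
      exact List.map_congr_left fun t ht => subst_subst t σ g
  decreasing_by have := List.sizeOf_lt_of_mem ht; simp_wf; omega

theorem subst_eq_self : ∀ {t : Term F} {σ : ℕ → Term F},
    (∀ v ∈ t.vars, σ v = var v) → t.subst σ = t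
  | .var n, σ, h => by simpa [subst_var] using h n (by simp [vars])
  | .app f ts, σ, h => by
      rw [subst_app]
      congr 1
      refine (List.map_congr_left fun t ht => subst_eq_self fun v hv => h v ?_).trans ts.map_id
      rw [vars_app]
      exact List.mem_flatMap.2 ⟨t, ht, hv⟩
  decreasing_by have := List.sizeOf_lt_of_mem ht; simp_wf; omega

theorem isGround_subst : ∀ (t : Term F) {g : ℕ → Term F}, GroundSubst g → (t.subst g).IsGround
  | .var n, g, hg => by simpa [subst_var] using hg n
  | .app f ts, g, hg => by
      rw [subst_app, IsGround, vars_app, List.flatMap_eq_nil_iff]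
      intro l hl
      obtain ⟨t, ht, rfl⟩ := List.mem_map.1 hl
      exact isGround_subst t hg
  decreasing_by have := List.sizeOf_lt_of_mem ht; simp_wf; omega

end Term

theorem GroundSubst.subst_left (σ : ℕ → Term F) {g : ℕ → Term F} (hg : GroundSubst g) :
    GroundSubst fun v => (σ v).subst g :=
  fun v => (σ v).isGround_subst hg

theorem rangeVars_map_subst_getD (ts : List (Term F)) :
    (rangeVars ts.length).map (Term.subst fun i => ts.getD i (.var i)) = ts := by
  apply List.ext_getElem
  · simp [rangeVars]
  · intro i h₁ h₂
    simp [rangeVars, Term.subst_var, h₂]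

namespace Atom

theorem subst_subst (a : Atom P F) (σ g : ℕ → Term F) :
    (a.subst σ).subst g = a.subst (fun v => (σ v).subst g) := by
  simp [subst, Function.comp_def, Term.subst_subst]

theorem subst_eq_self {a : Atom P F} {σ : ℕ → Term F} (h : ∀ t ∈ a.args, t.subst σ = t) :
    a.subst σ = a := by
  rw [subst, List.map_congr_left h, List.map_id']

end Atom

theorem eqAtom_subst (eqP : P) (s t : Term F) (g : ℕ → Term F) :
    (eqAtom eqP s t).subst g = eqAtom eqP (s.subst g) (t.subst g) :=
  rfl

theorem Clause.le_maxVar {C : Clause P F} {a : Atom P F} (ha : a ∈ C.atoms) {v : ℕ}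
    (hv : v ∈ a.vars) : v ≤ C.maxVar :=
  List.le_max_of_le' 0 (List.mem_flatMap.2 ⟨a, ha, hv⟩) le_rfl

section Shifting

variable {bar : P → P} {N : Set (Clause P F)} {I : Set (Atom P F)}

theorem barAtom_subst_notMem (hI : ∀ D ∈ bs bar N, satClause I D) {b : Atom P F}
    (hb : (b.pred, b.args.length) ∈ shiftedPreds N) {g : ℕ → Term F} (hg : GroundSubst g)
    (hbI : b.subst g ∈ I) : (barAtom bar b).subst g ∉ I := by
  intro hbarI
  -- instantiate `⊥ ← P(x₁,...,xₙ) ∧ P̄(x₁,...,xₙ)` with `xᵢ ↦ tᵢg`, where `b = P(t₁,...,tₙ)`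
  have hinst : ∀ p : P, (⟨p, rangeVars b.args.length⟩ : Atom P F).subst
      (fun i => (b.args.getD i (.var i)).subst g) = (⟨p, b.args⟩ : Atom P F).subst g := by
    intro p
    rw [← Atom.subst_subst]
    exact congrArg (Atom.subst g) (congrArg (Atom.mk p) (rangeVars_map_subst_getD b.args))
  obtain ⟨a, ha, -⟩ := hI _ (Or.inr ⟨_, hb, rfl⟩) (fun i => (b.args.getD i (.var i)).subst g)
    (hg.subst_left _) (by
    simp only [List.mem_cons, List.not_mem_nil, or_false, forall_eq_or_imp, forall_eq, hinst]
    exact ⟨hbI, hbarI⟩)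
  simp at ha

theorem satClause_of_forall_mem_bs (hI : ∀ D ∈ bs bar N, satClause I D) {C : Clause P F}
    (hC : C ∈ N) : satClause I C := by
  intro g hg hbody
  obtain ⟨a, ha, haI⟩ :=
    hI _ (Or.inl ⟨C, hC, rfl⟩) g hg fun b hb => hbody b (List.mem_of_mem_filter hb)
  rcases List.mem_append.1 ha with ha | ha
  · exact ⟨a, ha, haI⟩
  obtain ⟨b, hb, rfl⟩ := List.mem_map.1 ha
  have hshifted : (b.pred, b.args.length) ∈ shiftedPreds N :=
    ⟨C, hC, b, List.mem_of_mem_filter hb, by simpa using List.of_mem_filter hb, rfl⟩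
  exact absurd haI (barAtom_subst_notMem hI hshifted hg (hbody b (List.mem_of_mem_filter hb)))

end Shifting

theorem eqAtom_self_mem {I : Set (Atom P F)} {eqP : P} (hI : satClause I (reflClause eqP))
    {t : Term F} (ht : t.IsGround) : eqAtom eqP t t ∈ I := by
  obtain ⟨a, ha, haI⟩ := hI (fun _ => t) (fun _ => ht) (by simp [reflClause])
  simp only [reflClause, List.mem_singleton] at ha
  subst ha
  simpa [eqAtom_subst, Term.subst_var] using haI

/-- Undoes partial flattening: the fresh variable `C.maxVar + 1 + Nat.pair j i` is sent back to
the `i`-th argument of the `j`-th body atom. -/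
def Clause.unflattenSubst (C : Clause P F) (v : ℕ) : Term F :=
  if v ≤ C.maxVar then .var v
  else
    let ji := Nat.unpair (v - (C.maxVar + 1))
    (C.body[ji.1]?.bind (·.args[ji.2]?)).getD (.var v)

namespace Clause

theorem unflattenSubst_of_le {C : Clause P F} {v : ℕ} (hv : v ≤ C.maxVar) :
    C.unflattenSubst v = .var v :=
  if_pos hv

theorem unflattenSubst_fresh (C : Clause P F) {j : ℕ} (hj : j < C.body.length) {i : ℕ}
    (hi : i < C.body[j].args.length) :
    C.unflattenSubst (C.maxVar + 1 + Nat.pair j i) = C.body[j].args[i] := by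
  rw [unflattenSubst, if_neg (by omega)]
  simp [Nat.unpair_pair, hj, hi]

theorem subst_unflattenSubst_of_mem {C : Clause P F} {a : Atom P F} (ha : a ∈ C.atoms) :
    ∀ t ∈ a.args, t.subst C.unflattenSubst = t :=
  fun t ht => Term.subst_eq_self fun _ hv =>
    unflattenSubst_of_le (C.le_maxVar ha (List.mem_flatMap.2 ⟨t, ht, hv⟩))

end Clause

section Flattening

variable [DecidableEq P] {eqP : P}

theorem pfArgs_subst {a : Atom P F} {σ : ℕ → Term F} {base j : ℕ}
    (hargs : ∀ t ∈ a.args, t.subst σ = t)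
    (hfresh : ∀ i (hi : i < a.args.length), σ (base + Nat.pair j i) = a.args[i]) :
    (pfArgs eqP base j a).subst σ = a := by
  unfold pfArgs
  split_ifs
  · exact Atom.subst_eq_self hargs
  obtain ⟨p, ts⟩ := a
  simp only [Atom.subst, Atom.mk.injEq, true_and]
  apply List.ext_getElem (by simp)
  intro i _ h₂
  simp only [List.getElem_map, List.getElem_mapIdx]
  split_ifs
  · exact (Term.subst_var _ _).trans (hfresh i h₂)
  · exact hargs _ (List.getElem_mem h₂)

theorem pfEqs_subst {a : Atom P F} {σ : ℕ → Term F} {base j : ℕ}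
    (hargs : ∀ t ∈ a.args, t.subst σ = t)
    (hfresh : ∀ i (hi : i < a.args.length), σ (base + Nat.pair j i) = a.args[i])
    {b : Atom P F} (hb : b ∈ pfEqs eqP base j a) : ∃ t, b.subst σ = eqAtom eqP t t := by
  unfold pfEqs at hb
  split_ifs at hb
  · simp at hb
  obtain ⟨⟨k, t⟩, hkt, hsome⟩ := List.mem_filterMap.1 hb
  obtain ⟨i, hi, hkt⟩ := List.mem_mapIdx.1 hkt
  simp only [Prod.mk.injEq] at hkt
  obtain ⟨rfl, rfl⟩ := hkt
  split_ifs at hsome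
  · cases hsome
    refine ⟨a.args[i], ?_⟩
    rw [eqAtom_subst, hargs _ (List.getElem_mem hi), Term.subst_var, hfresh i hi]

namespace Clause

theorem pfClause_body_subst_unflattenSubst {C : Clause P F} {b : Atom P F}
    (hb : b ∈ (pfClause eqP C).body) :
    b.subst C.unflattenSubst ∈ C.body ∨ ∃ t, b.subst C.unflattenSubst = eqAtom eqP t t := by
  have hargs : ∀ j (hj : j < C.body.length), ∀ t ∈ C.body[j].args,
      t.subst C.unflattenSubst = t :=
    fun j hj => subst_unflattenSubst_of_mem (List.mem_append_right _ (List.getElem_mem hj))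
  rcases List.mem_append.1 hb with hb | hb
  · obtain ⟨j, hj, rfl⟩ := List.mem_mapIdx.1 hb
    left
    rw [pfArgs_subst (hargs j hj) fun i hi => C.unflattenSubst_fresh hj hi]
    exact List.getElem_mem hj
  · obtain ⟨l, hl, hbl⟩ := List.mem_flatten.1 hb
    obtain ⟨j, hj, rfl⟩ := List.mem_mapIdx.1 hl
    exact Or.inr (pfEqs_subst (hargs j hj) (fun i hi => C.unflattenSubst_fresh hj hi) hbl)

end Clause

variable {I : Set (Atom P F)}

theorem satClause_of_satClause_pfClause {C : Clause P F}
    (hrefl : ∀ t : Term F, t.IsGround → eqAtom eqP t t ∈ I)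
    (hpf : satClause I (pfClause eqP C)) : satClause I C := by
  intro g hg hbody
  have hbody' : ∀ b ∈ (pfClause eqP C).body,
      b.subst (fun v => (C.unflattenSubst v).subst g) ∈ I := by
    intro b hb
    rw [← Atom.subst_subst]
    rcases C.pfClause_body_subst_unflattenSubst hb with hmem | ⟨t, heq⟩
    · exact hbody _ hmem
    · rw [heq, eqAtom_subst]
      exact hrefl _ (t.isGround_subst hg)
  obtain ⟨a, ha, haI⟩ := hpf _ (hg.subst_left _) hbody'
  refine ⟨a, ha, ?_⟩
  have hhead : a.subst C.unflattenSubst = a :=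
    Atom.subst_eq_self (Clause.subst_unflattenSubst_of_mem (List.mem_append_left _ ha))
  rwa [← Atom.subst_subst, hhead] at haI

theorem satClause_of_forall_mem_pf {M : Set (Clause P F)} (hI : ∀ D ∈ pf eqP M, satClause I D)
    {C : Clause P F} (hC : C ∈ M) : satClause I C :=
  satClause_of_satClause_pfClause (fun _ ht => eqAtom_self_mem (hI _ (Or.inr rfl)) ht)
    (hI _ (Or.inl ⟨C, hC, rfl⟩))

end Flattening

theorem sh_completeness_general {P F : Type} [DecidableEq P]
    (eqP : P) (bar : P → P) (M : Set (Clause P F))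
    (hsat : Satisfiable (sh eqP bar M)) :
    Satisfiable M := by
  obtain ⟨I, hIground, hI⟩ := hsat
  exact ⟨I, hIground, fun C hC =>
    satClause_of_forall_mem_pf (fun D hD => satClause_of_forall_mem_bs hI hD) hC⟩

/-- **Completeness of shifting** (Proposition 2): for every clause set `M`, if `sh(M)` is
satisfiable then `M` is satisfiable, where `sh(M) = bs(pf(M))`. -/
theorem sh_completeness {P F : Type} [DecidableEq P] [DecidableEq F]
    (eqP : P) (bar : P → P) (M : Set (Clause P F)) (hfin : M.Finite)
    (hbarInj : Function.Injective bar)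
    (hbarFresh : ∀ p n, (bar p, n) ∉ predsOf (pf eqP M))
    (hsat : Satisfiable (sh eqP bar M)) :
    Satisfiable M :=
  sh_completeness_general eqP bar M hsat

end BUMG
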